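/- Let f(x) = x·(2^(β/x) − 1) with β > 0, and suppose 0 < ρ₁ < ρ₂, 0 < b₁ ≤ b₂, and ρ₁·f'(b₁) = ρ₂·f'(b₂) (the first-order optimality condition). Then ρ₁·f(b₁) ≤ ρ₂·f(b₂). -/

import Mathlib

/-! With `c = β log 2` and `t = c / x` one has `f x = x (exp t - 1)`, `f' x = exp t - 1 - t exp t < 0`
and `f x / f' x = -c / (t (t / (1 - exp (-t)) - 1))`. As `(1 - exp (-t)) / t` is the slope of the
concave function `1 - exp (-·)` between `0` and `t`, it decreases in `t`; so the denominator
increases with `t`, and `f / f'` decreases in `x`. Since `f' < 0`, the first-order condition turns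
`f b₂ / f' b₂ ≤ f b₁ / f' b₁` into `ρ₁ f b₁ ≤ ρ₂ f b₂`. -/

open Real Set

lemma one_sub_exp_neg_div_le_of_le {t s : ℝ} (ht : 0 < t) (hts : t ≤ s) :
    (1 - exp (-s)) / s ≤ (1 - exp (-t)) / t := by
  have h := convexOn_exp.secant_mono (a := 0) (x := -s) (y := -t) trivial trivial trivial
    (by linarith) (by linarith) (by linarith)
  rwa [exp_zero, sub_zero, sub_zero, ← neg_div_neg_eq, neg_sub, neg_neg,
    ← neg_div_neg_eq (exp (-t) - 1), neg_sub, neg_neg] at h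

lemma one_sub_exp_neg_pos {t : ℝ} (ht : 0 < t) : 0 < 1 - exp (-t) := by
  linarith [exp_lt_one_iff.mpr (neg_neg_of_pos ht)]

lemma one_lt_div_one_sub_exp_neg {t : ℝ} (ht : 0 < t) : 1 < t / (1 - exp (-t)) := by
  rw [one_lt_div (one_sub_exp_neg_pos ht)]
  linarith [add_one_lt_exp (neg_ne_zero.mpr ht.ne')]

lemma exp_sub_one_sub_mul_exp_lt_zero {t : ℝ} (ht : t ≠ 0) : exp t - 1 - t * exp t < 0 := by
  have h := mul_lt_mul_of_pos_left (add_one_lt_exp (neg_ne_zero.mpr ht)) (exp_pos t)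
  rw [← exp_add, add_neg_cancel, exp_zero] at h
  linarith

noncomputable def focWeight (t : ℝ) : ℝ := t * (t / (1 - exp (-t)) - 1)

lemma focWeight_pos {t : ℝ} (ht : 0 < t) : 0 < focWeight t :=
  mul_pos ht (sub_pos.mpr (one_lt_div_one_sub_exp_neg ht))

lemma focWeight_le_focWeight {t s : ℝ} (ht : 0 < t) (hts : t ≤ s) :
    focWeight t ≤ focWeight s := by
  have hs : 0 < s := ht.trans_le hts
  have hslope : t / (1 - exp (-t)) ≤ s / (1 - exp (-s)) := by
    rw [← one_div_div (1 - exp (-t)), ← one_div_div (1 - exp (-s))]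
    exact one_div_le_one_div_of_le (div_pos (one_sub_exp_neg_pos hs) hs)
      (one_sub_exp_neg_div_le_of_le ht hts)
  exact mul_le_mul hts (sub_le_sub_right hslope 1)
    (sub_pos.mpr (one_lt_div_one_sub_exp_neg ht)).le hs.le

lemma hasDerivAt_mul_exp_div_sub_one (c : ℝ) {x : ℝ} (hx : x ≠ 0) :
    HasDerivAt (fun x => x * (exp (c / x) - 1)) (exp (c / x) - 1 - c / x * exp (c / x)) x := by
  have h := (hasDerivAt_id' x).fun_mul (((hasDerivAt_inv hx).const_mul c).exp.sub_const 1)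
  simp only [← div_eq_mul_inv] at h
  refine h.congr_deriv ?_
  field_simp
  ring

lemma mul_exp_div_sub_one_div_eq {c x : ℝ} (hc : 0 < c) (hx : 0 < x) :
    x * (exp (c / x) - 1) / (exp (c / x) - 1 - c / x * exp (c / x)) = -c / focWeight (c / x) := by
  set t := c / x with htdef
  have ht : 0 < t := div_pos hc hx
  have hxt : x = c / t := by rw [htdef]; field_simp
  have hden := (exp_sub_one_sub_mul_exp_lt_zero ht.ne').ne
  have hk := (focWeight_pos ht).ne'
  have hexp : exp t - 1 ≠ 0 := (sub_pos.mpr (one_lt_exp_iff.mpr ht)).ne'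
  rw [div_eq_div_iff hden hk, hxt]
  unfold focWeight
  rw [exp_neg]
  field_simp
  ring

lemma antitoneOn_mul_exp_div_sub_one_div {c : ℝ} (hc : 0 < c) :
    AntitoneOn (fun x => x * (exp (c / x) - 1) / (exp (c / x) - 1 - c / x * exp (c / x)))
      (Ioi 0) := by
  intro x hx y hy hxy
  simp only [mul_exp_div_sub_one_div_eq hc hx, mul_exp_div_sub_one_div_eq hc hy, neg_div]
  exact neg_le_neg (div_le_div_of_nonneg_left hc.le (focWeight_pos (div_pos hc hy))
    (focWeight_le_focWeight (div_pos hc hy) (div_le_div_of_nonneg_left hc.le hx hxy)))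

lemma mul_le_mul_of_mul_eq_mul_of_div_le {ρ₁ ρ₂ u₁ u₂ v₁ v₂ : ℝ} (hρ₁ : 0 ≤ ρ₁) (hv₁ : v₁ < 0)
    (hv₂ : v₂ ≠ 0) (hv : ρ₁ * v₁ = ρ₂ * v₂) (h : u₂ / v₂ ≤ u₁ / v₁) : ρ₁ * u₁ ≤ ρ₂ * u₂ :=
  calc ρ₁ * u₁ = ρ₁ * v₁ * (u₁ / v₁) := by field_simp [hv₁.ne]
    _ ≤ ρ₁ * v₁ * (u₂ / v₂) :=
      mul_le_mul_of_nonpos_left h (mul_nonpos_of_nonneg_of_nonpos hρ₁ hv₁.le)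
    _ = ρ₂ * u₂ := by rw [hv]; field_simp

theorem first_order_condition_implies_general (β : ℝ) (hβ : 0 < β)
    (ρ₁ ρ₂ b₁ b₂ : ℝ) (hρ₁ : 0 < ρ₁)
    (hb₁ : 0 < b₁) (hb : b₁ ≤ b₂)
    (f : ℝ → ℝ) (hf : ∀ x : ℝ, f x = x * ((2 : ℝ) ^ (β / x) - 1))
    (hfoc : ρ₁ * deriv f b₁ = ρ₂ * deriv f b₂) :
    ρ₁ * f b₁ ≤ ρ₂ * f b₂ := by
  set c := log 2 * β
  have hc : 0 < c := mul_pos (log_pos one_lt_two) hβ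
  have hf_exp : ∀ x, f x = x * (exp (c / x) - 1) := fun x => by
    rw [hf, rpow_def_of_pos two_pos, mul_div_assoc]
  have hderiv {x : ℝ} (hx : 0 < x) : deriv f x = exp (c / x) - 1 - c / x * exp (c / x) := by
    rw [funext hf_exp]
    exact (hasDerivAt_mul_exp_div_sub_one c hx.ne').deriv
  have hb₂ : 0 < b₂ := hb₁.trans_le hb
  rw [hderiv hb₁, hderiv hb₂] at hfoc
  rw [hf_exp, hf_exp]
  exact mul_le_mul_of_mul_eq_mul_of_div_le hρ₁.le
    (exp_sub_one_sub_mul_exp_lt_zero (div_pos hc hb₁).ne')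
    (exp_sub_one_sub_mul_exp_lt_zero (div_pos hc hb₂).ne').ne hfoc
    (antitoneOn_mul_exp_div_sub_one_div hc hb₁ hb₂ hb)

theorem first_order_condition_implies (β : ℝ) (hβ : 0 < β)
    (ρ₁ ρ₂ b₁ b₂ : ℝ) (hρ₁ : 0 < ρ₁) (hρ : ρ₁ < ρ₂)
    (hb₁ : 0 < b₁) (hb : b₁ ≤ b₂)
    (f : ℝ → ℝ) (hf : ∀ x : ℝ, f x = x * ((2 : ℝ) ^ (β / x) - 1))
    (hfoc : ρ₁ * deriv f b₁ = ρ₂ * deriv f b₂) :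
    ρ₁ * f b₁ ≤ ρ₂ * f b₂ :=
  first_order_condition_implies_general β hβ ρ₁ ρ₂ b₁ b₂ hρ₁ hb₁ hb f hf hfoc
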